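/- Let $3 \leq k \leq n/2$ and let $I_1, \dots, I_s$ be $k$-element subsets of $\mathbb{Z}/n\mathbb{Z}$. For $i \in \mathbb{Z}/n\mathbb{Z}$ set $r_i = |\{j : i \in I_j\}|$. Let $\sigma$ be the $s \times s$ matrix $\sigma = \sum_{i=1}^{s-1} E_{i,i+1} + t E_{s,1}$ over $\mathbb{C}[t]$, and define $x_i = \sigma^{s - r_i}$, $y_i = \sigma^{r_i}$. Then for every $i \in \mathbb{Z}/n\mathbb{Z}$: (a) $x_i y_i = y_{i+1} x_{i+1} = t \cdot \mathrm{Id}_s$, and (b) $x_{i+k-1} x_{i+k-2} \cdots x_{i+1} x_i = y_{i+k} y_{i+k+1} \cdots y_{i-1}$, i.e., the composition of $k$ consecutive $x$-maps equals the composition of $n-k$ consecutive $y$-maps (both products taken cyclically). -/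

import Mathlib

/-!
Row by row, `σ` shifts the standard basis cyclically and picks up a factor `t` when wrapping
around, so `σ ^ s = t • 1`. All `x i`, `y i` are powers of `σ`, which gives (a) at once and turns
(b) into an equality of exponents. The exponent on the left is `s * k` minus the sum of `r` over
a window of `k` consecutive residues; since `∑ i, r i = s * k` by double counting, this is the sum
of `r` over the complementary window of `n - k` residues, the exponent on the right.
-/

open Finset

section CyclicShift

variable {R : Type*} [Semiring R]

-- The paper's `σ = ∑ E_{i,i+1} + t E_{s,1}`, with rows and columns indexed from `0`.
def cyclicShift (s : ℕ) (t : R) : Matrix (Fin s) (Fin s) R :=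
  Matrix.of fun a b => if (b : ℕ) = a + 1 then 1 else if (a : ℕ) = s - 1 ∧ (b : ℕ) = 0 then t else 0

theorem cyclicShift_apply (s : ℕ) (t : R) (a b : Fin s) :
    cyclicShift s t a b =
      if (b : ℕ) = a + 1 then 1 else if (a : ℕ) = s - 1 ∧ (b : ℕ) = 0 then t else 0 :=
  rfl

theorem cyclicShift_pow_apply {s m : ℕ} (t : R) (hm : m ≤ s) (a b : Fin s) :
    (cyclicShift s t ^ m) a b =
      if (b : ℕ) = a + m then 1 else if (b : ℕ) + s = a + m then t else 0 := by
  induction m generalizing a b with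
  | zero =>
    rw [pow_zero, Matrix.one_apply, if_neg (by omega : ¬ (b : ℕ) + s = a + 0)]
    simp only [Fin.ext_iff, add_zero, eq_comm]
  | succ m ih =>
    have hb := b.isLt
    rw [pow_succ', Matrix.mul_apply]
    by_cases ha : (a : ℕ) + 1 < s
    · rw [Fintype.sum_eq_single ⟨a + 1, ha⟩ fun c hc => ?_]
      · rw [cyclicShift_apply, if_pos rfl, one_mul, ih (by omega), Fin.val_mk, add_right_comm,
          ← add_assoc]
      · rw [cyclicShift_apply, if_neg fun h => hc (Fin.ext h), if_neg (by omega), zero_mul]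
    · rw [Fintype.sum_eq_single ⟨0, by omega⟩ fun c hc => ?_]
      · rw [cyclicShift_apply, if_neg (by simp), if_pos ⟨by omega, rfl⟩, ih (by omega),
          if_neg (by omega : ¬ (b : ℕ) = a + (m + 1))]
        simp only [zero_add, if_neg (show ¬ (b : ℕ) + s = m by omega),
          (by omega : ((b : ℕ) + s = a + (m + 1)) ↔ (b : ℕ) = m)]
        split_ifs <;> simp
      · have : (c : ℕ) ≠ 0 := fun h => hc (Fin.ext h)
        rw [cyclicShift_apply, if_neg (by omega), if_neg (by omega), zero_mul]

theorem cyclicShift_pow_self (s : ℕ) (t : R) : cyclicShift s t ^ s = t • 1 := by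
  ext a b
  rw [cyclicShift_pow_apply t le_rfl, if_neg (by omega), Matrix.smul_apply, Matrix.one_apply,
    smul_eq_mul]
  simp only [add_left_inj, Fin.ext_iff, eq_comm (a := (b : ℕ))]
  split_ifs <;> simp

end CyclicShift

theorem List.prod_map_pow_eq_pow_sum {M ι : Type*} [Monoid M] (a : M) (f : ι → ℕ) (l : List ι) :
    (l.map fun i => a ^ f i).prod = a ^ (l.map f).sum := by
  induction l with
  | nil => simp
  | cons i l ih => rw [List.map_cons, List.prod_cons, ih, List.map_cons, List.sum_cons, pow_add]

theorem Finset.sum_range_eq_sum_map_range {M : Type*} [AddCommMonoid M] (f : ℕ → M) (n : ℕ) :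
    ∑ m ∈ range n, f m = ((List.range n).map f).sum :=
  rfl

theorem Finset.sum_card_filter_mem_eq_sum_card {α ι : Type*} [Fintype α] [Fintype ι]
    [DecidableEq α] (I : ι → Finset α) : ∑ a, #{j | a ∈ I j} = ∑ j, #(I j) := by
  simpa [bipartiteAbove, bipartiteBelow, filter_univ_mem] using
    sum_card_bipartiteAbove_eq_sum_card_bipartiteBelow (s := univ) (t := univ) (fun a j => a ∈ I j)

namespace ZMod

variable {n : ℕ} [NeZero n] {M : Type*} [AddCommMonoid M]

theorem sum_range_add_natCast (f : ZMod n → M) (i : ZMod n) :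
    ∑ m ∈ range n, f (i + m) = ∑ j, f j := by
  rw [← Fintype.sum_equiv (Equiv.addLeft i) (fun j => f (i + j)) f fun _ => rfl]
  refine sum_nbij' (fun m => (m : ZMod n)) ZMod.val ?_ ?_ ?_ ?_ ?_ <;> intro m _ <;>
    simp_all [ZMod.val_lt, Nat.mod_eq_of_lt]

theorem sum_window_add_sum_window {k : ℕ} (hk : k ≤ n) (f : ZMod n → M) (i : ZMod n) :
    ∑ m ∈ range k, f (i + m) + ∑ m ∈ range (n - k), f (i + (k + m : ℕ)) = ∑ j, f j := by
  have := sum_range_add (fun m => f (i + m)) k (n - k)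
  rw [Nat.add_sub_cancel' hk, sum_range_add_natCast] at this
  exact this.symm

theorem sum_range_tsub_eq_sum_window {k s : ℕ} (hk : k ≤ n) (r : ZMod n → ℕ)
    (hrs : ∀ j, r j ≤ s) (hsum : ∑ j, r j = s * k) (i : ZMod n) :
    ∑ m ∈ range k, (s - r (i + (k - 1 - m : ℕ))) = ∑ m ∈ range (n - k), r (i + (k + m : ℕ)) := by
  have hwindow := sum_window_add_sum_window hk r i
  rw [sum_tsub_distrib _ fun m _ => hrs _, sum_const, card_range, smul_eq_mul,
    sum_range_reflect (fun m => r (i + m)) k]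
  rw [hsum, mul_comm] at hwindow
  omega

end ZMod

open Polynomial in
theorem stmt_1_general (n k s : ℕ) (hn : 2 * k ≤ n)
    (I : Fin s → Finset (ZMod n)) (hI : ∀ j, (I j).card = k)
    (r : ZMod n → ℕ)
    (hr : ∀ i, r i = (Finset.univ.filter (fun j : Fin s => i ∈ I j)).card)
    (σ : Matrix (Fin s) (Fin s) (Polynomial ℂ))
    (hσ : ∀ a b : Fin s, σ a b =
      if (b : ℕ) = (a : ℕ) + 1 then 1
      else if (a : ℕ) = s - 1 ∧ (b : ℕ) = 0 then (X : Polynomial ℂ) else 0)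
    (x y : ZMod n → Matrix (Fin s) (Fin s) (Polynomial ℂ))
    (hx : ∀ i, x i = σ ^ (s - r i)) (hy : ∀ i, y i = σ ^ (r i)) :
    (∀ i : ZMod n,
      x i * y i = (X : Polynomial ℂ) • (1 : Matrix (Fin s) (Fin s) (Polynomial ℂ)) ∧
      y (i + 1) * x (i + 1) =
        (X : Polynomial ℂ) • (1 : Matrix (Fin s) (Fin s) (Polynomial ℂ)))
    ∧ (∀ i : ZMod n,
      ((List.range k).map (fun m => x (i + ((k - 1 - m : ℕ) : ZMod n)))).prod
        = ((List.range (n - k)).map (fun m => y (i + ((k + m : ℕ) : ZMod n)))).prod) := by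
  have hσs : σ ^ s = (X : ℂ[X]) • 1 := by
    rw [show σ = cyclicShift s X from Matrix.ext hσ, cyclicShift_pow_self]
  have hrs (i : ZMod n) : r i ≤ s :=
    (hr i).trans_le ((card_le_univ _).trans_eq (Fintype.card_fin s))
  refine ⟨fun i => ⟨?_, ?_⟩, fun i => ?_⟩
  · rw [hx, hy, ← pow_add, Nat.sub_add_cancel (hrs i), hσs]
  · rw [hx, hy, ← pow_add, Nat.add_sub_cancel' (hrs _), hσs]
  rcases Nat.eq_zero_or_pos n with rfl | hn0
  · obtain rfl : k = 0 := by omega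
    rfl
  have : NeZero n := ⟨hn0.ne'⟩
  have hsum : ∑ j, r j = s * k := by
    simp only [hr, sum_card_filter_mem_eq_sum_card, hI, sum_const, card_univ, Fintype.card_fin,
      smul_eq_mul]
  simp only [hx, hy, List.prod_map_pow_eq_pow_sum, ← sum_range_eq_sum_map_range,
    ZMod.sum_range_tsub_eq_sum_window (by omega) r hrs hsum]

open Polynomial in
/-- The maps x_i = σ^{s-r_i}, y_i = σ^{r_i} of the construction L(I_1,…,I_s) satisfy the
defining relations of B_{k,n}: x_i y_i = y_{i+1} x_{i+1} = t·Id and x^k = y^{n-k}. -/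
theorem stmt_1 (n k s : ℕ) (hs : 1 ≤ s) (hk : 3 ≤ k) (hn : 2 * k ≤ n)
    (I : Fin s → Finset (ZMod n)) (hI : ∀ j, (I j).card = k)
    (r : ZMod n → ℕ)
    (hr : ∀ i, r i = (Finset.univ.filter (fun j : Fin s => i ∈ I j)).card)
    (σ : Matrix (Fin s) (Fin s) (Polynomial ℂ))
    (hσ : ∀ a b : Fin s, σ a b =
      if (b : ℕ) = (a : ℕ) + 1 then 1
      else if (a : ℕ) = s - 1 ∧ (b : ℕ) = 0 then (X : Polynomial ℂ) else 0)
    (x y : ZMod n → Matrix (Fin s) (Fin s) (Polynomial ℂ))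
    (hx : ∀ i, x i = σ ^ (s - r i)) (hy : ∀ i, y i = σ ^ (r i)) :
    (∀ i : ZMod n,
      x i * y i = (X : Polynomial ℂ) • (1 : Matrix (Fin s) (Fin s) (Polynomial ℂ)) ∧
      y (i + 1) * x (i + 1) =
        (X : Polynomial ℂ) • (1 : Matrix (Fin s) (Fin s) (Polynomial ℂ)))
    ∧ (∀ i : ZMod n,
      ((List.range k).map (fun m => x (i + ((k - 1 - m : ℕ) : ZMod n)))).prod
        = ((List.range (n - k)).map (fun m => y (i + ((k + m : ℕ) : ZMod n)))).prod) :=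
  stmt_1_general n k s hn I hI r hr σ hσ x y hx hy
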